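/- Any quasi-Clifford algebraic curvature tensor with at most one of the Hurwitz-like constants cᵢ equal to zero is Jacobi-dual. That is, if R = μ₀R⁰ + Σ_{i=1}^m μᵢR^{Jᵢ} is quasi-Clifford with constants c₁,…,c_m of which at most one equals 0, then for all X, Y ∈ V with ε_X ≠ 0, if Y is an eigenvector of 𝒥_X then X is an eigenvector of 𝒥_Y. -/

import Mathlib

/-!
The Jacobi operator of a quasi-Clifford tensor is
`𝒥_X Y = μ₀ (ε_X Y - g(X,Y) X) - Σ 3 μᵢ g(Y, Jᵢ X) Jᵢ X`. If `𝒥_X Y = λ Y`, put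
`κ = λ - μ₀ ε_X`, `p = μ₀ g(X,Y)`, `bᵢ = 3 μᵢ g(Y, Jᵢ X)` and `B = Σ bᵢ Jᵢ`; then
`κ Y = -p X - B X` while `𝒥_Y X = μ₀ ε_Y X + (B Y - p Y)`, so it suffices that `B Y - p Y` is a
multiple of `X`. The Hurwitz-like relations make `B² = (Σ bᵢ² cᵢ) id`, and applying `B` to the
first identity gives `κ (B Y - p Y) = (p² - Σ bᵢ² cᵢ) X`, which settles `κ ≠ 0`.
If `κ = 0`, then `p X + Σ bᵢ Jᵢ X = 0`, where `X, J₁ X, …, J_m X` are mutually orthogonal with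
`ε_{Jᵢ X} = -cᵢ ε_X`; hence `p = 0` and every `bᵢ cᵢ = 0`. As at most one `cᵢ` vanishes, at most
one `bᵢ` survives, and it vanishes too because `bᵢ ≠ 0` forces `Jᵢ X ≠ 0`. So `B Y - p Y = 0`.
-/

open Module Finset

/-- The algebraic curvature tensor `R⁰` of constant sectional curvature one. -/
def R0 {V : Type*} [AddCommGroup V] [Module ℝ V] (g : LinearMap.BilinForm ℝ V)
    (X Y Z W : V) : ℝ :=
  g Y Z * g X W - g X Z * g Y W

/-- The algebraic curvature tensor `R^J` generated by a `g`-skew-adjoint endomorphism `J`. -/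
def RJ {V : Type*} [AddCommGroup V] [Module ℝ V] (g : LinearMap.BilinForm ℝ V)
    (J : V →ₗ[ℝ] V) (X Y Z W : V) : ℝ :=
  g (J X) Z * g (J Y) W - g (J Y) Z * g (J X) W + 2 * g (J X) Y * g (J Z) W

def IsHurwitzFamily {V : Type*} [AddCommGroup V] [Module ℝ V] {m : ℕ} (c : Fin m → ℝ)
    (J : Fin m → V →ₗ[ℝ] V) : Prop :=
  ∀ i j, J i ∘ₗ J j + J j ∘ₗ J i = ((if i = j then 2 * c i else 0 : ℝ) • LinearMap.id)

namespace IsHurwitzFamily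

variable {V : Type*} [AddCommGroup V] [Module ℝ V] {m : ℕ} {c : Fin m → ℝ}
  {J : Fin m → V →ₗ[ℝ] V}

theorem mul_add_mul (h : IsHurwitzFamily c J) (i j : Fin m) :
    J i * J j + J j * J i = (if i = j then 2 * c i else 0 : ℝ) • (1 : Module.End ℝ V) :=
  h i j

theorem apply_apply_add (h : IsHurwitzFamily c J) (i j : Fin m) (x : V) :
    J i (J j x) + J j (J i x) = (if i = j then 2 * c i else 0 : ℝ) • x :=
  LinearMap.congr_fun (h i j) x

theorem apply_apply_self (h : IsHurwitzFamily c J) (i : Fin m) (x : V) :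
    J i (J i x) = c i • x := by
  have h2 := h.apply_apply_add i i x
  rw [if_pos rfl, ← two_smul ℝ, mul_smul] at h2
  exact smul_right_injective V two_ne_zero h2

theorem apply_apply_of_ne (h : IsHurwitzFamily c J) {i j : Fin m} (hij : i ≠ j) (x : V) :
    J i (J j x) = -J j (J i x) := by
  have h2 := h.apply_apply_add i j x
  rw [if_neg hij, zero_smul] at h2
  exact eq_neg_of_add_eq_zero_left h2

theorem sum_smul_mul_self (h : IsHurwitzFamily c J) (w : Fin m → ℝ) :
    (∑ i, w i • J i) * (∑ i, w i • J i) = (∑ i, w i ^ 2 * c i) • (1 : Module.End ℝ V) := by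
  have hexp : (∑ i, w i • J i) * (∑ i, w i • J i) = ∑ i, ∑ j, (w i * w j) • (J i * J j) := by
    simp only [sum_mul_sum, smul_mul_smul_comm]
  have h2 : (2 : ℝ) • ((∑ i, w i • J i) * (∑ i, w i • J i))
      = (2 : ℝ) • (∑ i, w i ^ 2 * c i) • (1 : Module.End ℝ V) := by
    calc (2 : ℝ) • ((∑ i, w i • J i) * (∑ i, w i • J i))
        = ∑ i, ∑ j, (w i * w j) • (J i * J j + J j * J i) := by
          rw [two_smul, hexp]
          nth_rewrite 2 [Finset.sum_comm]
          simp only [← sum_add_distrib, smul_add, mul_comm]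
      _ = ∑ i, (w i * w i * (2 * c i)) • (1 : Module.End ℝ V) := by
          simp only [h.mul_add_mul, ite_smul, zero_smul, smul_ite, smul_zero, smul_smul,
            sum_ite_eq, mem_univ, if_true]
      _ = _ := by
          rw [smul_smul, ← sum_smul, mul_sum]
          exact congrArg (· • _) (sum_congr rfl fun i _ => by ring)
  exact smul_right_injective _ two_ne_zero h2

end IsHurwitzFamily

theorem Module.End.smul_apply_sub_smul_eq_of_mul_self_eq {R M : Type*} [CommRing R]
    [AddCommGroup M] [Module R M] {B : Module.End R M} {s : R} (hB : B * B = s • 1)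
    {κ p : R} {x y : M} (h : κ • y = -(p • x) - B x) :
    κ • (B y - p • y) = (p ^ 2 - s) • x := by
  have hBB : B (B x) = s • x := by
    rw [← Module.End.mul_apply, hB, LinearMap.smul_apply, Module.End.one_apply]
  calc κ • (B y - p • y) = B (κ • y) - p • (κ • y) := by
        rw [map_smul, smul_sub, smul_comm κ p]
    _ = (p ^ 2 - s) • x := by
        rw [h, map_sub, map_neg, map_smul, hBB]
        module

theorem eq_zero_of_sum_smul_eq_zero_of_mul_eq_zero {ι R M : Type*} [Fintype ι] [Field R]
    [AddCommGroup M] [Module R M] {b c : ι → R} {v : ι → M}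
    (hc : ∀ i j, c i = 0 → c j = 0 → i = j) (hbc : ∀ i, b i * c i = 0)
    (hv : ∀ i, v i = 0 → b i = 0) (hsum : ∑ i, b i • v i = 0) (i : ι) : b i = 0 := by
  by_contra hbi
  have hci : c i = 0 := (mul_eq_zero.mp (hbc i)).resolve_left hbi
  have hothers : ∀ j, j ≠ i → b j = 0 := fun j hj =>
    by_contra fun hbj => hj (hc j i ((mul_eq_zero.mp (hbc j)).resolve_left hbj) hci)
  rw [sum_eq_single i (fun j _ hj => by rw [hothers j hj, zero_smul]) (by simp)] at hsum
  exact hbi (hv i ((smul_eq_zero.mp hsum).resolve_left hbi))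

section BilinForm

variable {V : Type*} [AddCommGroup V] [Module ℝ V] {g : LinearMap.BilinForm ℝ V}

theorem apply_self_eq_zero_of_skew (hsymm : ∀ x y, g x y = g y x) {A : V →ₗ[ℝ] V}
    (hA : ∀ x y, g (A x) y = -g x (A y)) (x : V) : g (A x) x = 0 := by
  linarith [hA x x, hsymm x (A x)]

theorem apply_swap_of_skew (hsymm : ∀ x y, g x y = g y x) {A : V →ₗ[ℝ] V}
    (hA : ∀ x y, g (A x) y = -g x (A y)) (x y : V) : g x (A y) = -g y (A x) := by
  rw [← hsymm, hA]

variable {m : ℕ} {c : Fin m → ℝ} {J : Fin m → V →ₗ[ℝ] V}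

theorem IsHurwitzFamily.bilin_apply_apply (h : IsHurwitzFamily c J)
    (hsymm : ∀ x y, g x y = g y x) (hskew : ∀ i, ∀ x y, g (J i x) y = -g x (J i y))
    (i j : Fin m) (x : V) :
    g (J i x) (J j x) = if i = j then -(c i * g x x) else 0 := by
  split_ifs with hij
  · rw [hij, hskew, h.apply_apply_self, map_smul, smul_eq_mul]
  · have h1 := hskew i x (J j x)
    rw [h.apply_apply_of_ne hij, map_neg] at h1
    linarith [hskew j x (J i x), hsymm (J i x) (J j x)]

theorem IsHurwitzFamily.eq_zero_of_smul_add_sum_smul_eq_zero (h : IsHurwitzFamily c J)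
    (hsymm : ∀ x y, g x y = g y x) (hskew : ∀ i, ∀ x y, g (J i x) y = -g x (J i y))
    {x : V} (hx : g x x ≠ 0) {p : ℝ} {b : Fin m → ℝ} (hsum : p • x + ∑ i, b i • J i x = 0) :
    p = 0 ∧ ∀ i, b i * c i = 0 := by
  have hpair : ∀ z, p * g x z + ∑ i, b i * g (J i x) z = 0 := fun z => by
    simpa using LinearMap.congr_fun (congrArg g hsum) z
  constructor
  · have hx' := hpair x
    simp only [apply_self_eq_zero_of_skew hsymm (hskew _), mul_zero, sum_const_zero,
      add_zero] at hx'
    exact (mul_eq_zero.mp hx').resolve_right hx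
  · intro j
    have hj := hpair (J j x)
    simp only [h.bilin_apply_apply hsymm hskew, mul_ite, mul_zero, sum_ite_eq', mem_univ,
      if_true] at hj
    rw [hsymm, apply_self_eq_zero_of_skew hsymm (hskew j), mul_zero, zero_add, mul_neg,
      neg_eq_zero, ← mul_assoc] at hj
    exact (mul_eq_zero.mp hj).resolve_right hx

theorem IsHurwitzFamily.exists_sum_smul_apply_sub_smul_eq_smul (h : IsHurwitzFamily c J)
    (hsymm : ∀ x y, g x y = g y x) (hskew : ∀ i, ∀ x y, g (J i x) y = -g x (J i y))
    (hone : ∀ i j, c i = 0 → c j = 0 → i = j) {X Y : V} (hX : g X X ≠ 0) {κ p : ℝ}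
    {b : Fin m → ℝ} (hb : ∀ i, J i X = 0 → b i = 0)
    (hE : κ • Y = -(p • X) - ∑ i, b i • J i X) :
    ∃ ν : ℝ, ∑ i, b i • J i Y - p • Y = ν • X := by
  by_cases hκ : κ = 0
  · have hsum : p • X + ∑ i, b i • J i X = 0 := by
      rw [hκ, zero_smul] at hE
      linear_combination (norm := module) hE
    obtain ⟨hp, hbc⟩ := h.eq_zero_of_smul_add_sum_smul_eq_zero hsymm hskew hX hsum
    rw [hp, zero_smul, zero_add] at hsum
    have hb0 := eq_zero_of_sum_smul_eq_zero_of_mul_eq_zero hone hbc hb hsum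
    exact ⟨0, by simp [hb0, hp]⟩
  · have hB := h.sum_smul_mul_self b
    have hE' : κ • Y = -(p • X) - (∑ i, b i • J i) X := by
      simpa only [LinearMap.sum_apply, LinearMap.smul_apply] using hE
    have key := Module.End.smul_apply_sub_smul_eq_of_mul_self_eq hB hE'
    refine ⟨(p ^ 2 - ∑ i, b i ^ 2 * c i) / κ, ?_⟩
    rw [div_eq_inv_mul, mul_smul, ← key, inv_smul_smul₀ hκ]
    simp only [LinearMap.sum_apply, LinearMap.smul_apply]

theorem R0_jacobi (hsymm : ∀ x y, g x y = g y x) (P Q Z : V) :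
    R0 g Q P P Z = g P P * g Q Z - g P Q * g P Z := by
  rw [R0, hsymm Q P]

theorem RJ_jacobi (hsymm : ∀ x y, g x y = g y x) {A : V →ₗ[ℝ] V}
    (hA : ∀ x y, g (A x) y = -g x (A y)) (P Q Z : V) :
    RJ g A Q P P Z = -(3 * g Q (A P) * g (A P) Z) := by
  rw [RJ, apply_self_eq_zero_of_skew hsymm hA, hA Q P]
  ring

theorem jacobi_eq_of_quasiClifford (hsymm : ∀ x y, g x y = g y x) (hsep : g.SeparatingLeft)
    {μ₀ : ℝ} {μ : Fin m → ℝ} (hskew : ∀ i, ∀ x y, g (J i x) y = -g x (J i y))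
    {R : V → V → V → V → ℝ}
    (hR : ∀ X Y Z W, R X Y Z W = μ₀ * R0 g X Y Z W + ∑ i, μ i * RJ g (J i) X Y Z W)
    {Jac : V → V →ₗ[ℝ] V} (hJac : ∀ X Y Z, g (Jac X Y) Z = R Y X X Z) (P Q : V) :
    Jac P Q = μ₀ • (g P P • Q - g P Q • P) - ∑ i, (3 * μ i * g Q (J i P)) • J i P := by
  rw [← sub_eq_zero]
  refine hsep _ fun Z => ?_
  simp only [map_sub, map_smul, map_sum, LinearMap.sub_apply, LinearMap.smul_apply,
    LinearMap.sum_apply, smul_eq_mul, hJac, hR, R0_jacobi hsymm,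
    RJ_jacobi hsymm (hskew _)]
  simp only [mul_neg, sum_neg_distrib, ← mul_assoc, mul_comm (μ _) 3]
  ring

end BilinForm

theorem quasiClifford_jacobiDual_of_at_most_one_zero_general
    {V : Type*} [AddCommGroup V] [Module ℝ V]
    (g : LinearMap.BilinForm ℝ V) (hsymm : ∀ x y, g x y = g y x) (hnd : g.Nondegenerate)
    {m : ℕ} (μ₀ : ℝ) (μ c : Fin m → ℝ) (J : Fin m → V →ₗ[ℝ] V)
    (hskew : ∀ i, ∀ x y : V, g (J i x) y = - g x (J i y))
    (hhur : ∀ i j, J i ∘ₗ J j + J j ∘ₗ J i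
      = ((if i = j then 2 * c i else 0 : ℝ) • LinearMap.id : V →ₗ[ℝ] V))
    (R : V → V → V → V → ℝ)
    (hR : ∀ X Y Z W, R X Y Z W = μ₀ * R0 g X Y Z W + ∑ i, μ i * RJ g (J i) X Y Z W)
    (Jac : V → V →ₗ[ℝ] V)
    (hJac : ∀ X Y Z, g (Jac X Y) Z = R Y X X Z)
    (hone : ∀ i j : Fin m, c i = 0 → c j = 0 → i = j) :
    ∀ X Y : V, g X X ≠ 0 →
      (∃ lam : ℝ, Module.End.HasEigenvector (Jac X) lam Y) →
      ∃ lam : ℝ, Module.End.HasEigenvector (Jac Y) lam X := by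
  rintro X Y hX ⟨lam, hY⟩
  set b : Fin m → ℝ := fun i => 3 * μ i * g Y (J i X)
  have hE : (lam - μ₀ * g X X) • Y = -((μ₀ * g X Y) • X) - ∑ i, b i • J i X := by
    rw [sub_smul, ← hY.apply_eq_smul, jacobi_eq_of_quasiClifford hsymm hnd.1 hskew hR hJac]
    module
  obtain ⟨ν, hν⟩ := IsHurwitzFamily.exists_sum_smul_apply_sub_smul_eq_smul (c := c) hhur
    hsymm hskew hone hX (fun i hi => by simp [b, hi]) hE
  have hJacY : Jac Y X = (μ₀ * g Y Y) • X + (∑ i, b i • J i Y - (μ₀ * g X Y) • Y) := by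
    rw [jacobi_eq_of_quasiClifford hsymm hnd.1 hskew hR hJac, hsymm Y X]
    simp only [apply_swap_of_skew hsymm (hskew _) X Y, mul_neg, neg_smul, sum_neg_distrib, b]
    module
  refine ⟨μ₀ * g Y Y + ν, Module.End.mem_eigenspace_iff.mpr ?_, fun h0 => hX (by simp [h0])⟩
  rw [hJacY, hν, add_smul]

/-- any quasi-Clifford algebraic curvature tensor with at most one `cᵢ = 0`
is Jacobi-dual. -/
theorem quasiClifford_jacobiDual_of_at_most_one_zero
    {V : Type*} [AddCommGroup V] [Module ℝ V] [FiniteDimensional ℝ V]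
    (g : LinearMap.BilinForm ℝ V) (hsymm : ∀ x y, g x y = g y x) (hnd : g.Nondegenerate)
    {m : ℕ} (μ₀ : ℝ) (μ c : Fin m → ℝ) (J : Fin m → V →ₗ[ℝ] V)
    (hskew : ∀ i, ∀ x y : V, g (J i x) y = - g x (J i y))
    (hhur : ∀ i j, J i ∘ₗ J j + J j ∘ₗ J i
      = ((if i = j then 2 * c i else 0 : ℝ) • LinearMap.id : V →ₗ[ℝ] V))
    (R : V → V → V → V → ℝ)
    (hR : ∀ X Y Z W, R X Y Z W = μ₀ * R0 g X Y Z W + ∑ i, μ i * RJ g (J i) X Y Z W)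
    (Jac : V → V →ₗ[ℝ] V)
    (hJac : ∀ X Y Z, g (Jac X Y) Z = R Y X X Z)
    (hone : ∀ i j : Fin m, c i = 0 → c j = 0 → i = j) :
    ∀ X Y : V, g X X ≠ 0 →
      (∃ lam : ℝ, Module.End.HasEigenvector (Jac X) lam Y) →
      ∃ lam : ℝ, Module.End.HasEigenvector (Jac Y) lam X :=
  quasiClifford_jacobiDual_of_at_most_one_zero_general g hsymm hnd μ₀ μ c J hskew hhur R hR Jac hJac
    hone
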